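/- Let m, a : ℝ → ℝ³ be differentiable and satisfy ṁ = p × a, ȧ = m × a with p constant. Then the Lax matrix L(λ) = P + M/λ + A/λ² (su(2) matrices of p, m, a) satisfies, for all λ ≠ 0, the Lax equation d/dt L(λ) = [L(λ), A/λ] = -[L(λ), λP + M]. -/

import Mathlib

/-!
Writing `L = P + M/λ + A/λ²`, the equations of motion give
`dL/dt = [P, A]/λ + [M, A]/λ²`, which is `[L, A/λ]` because `[A, A] = 0`.
Since `A/λ = λL - (λP + M)` and `[L, L] = 0`, this equals `-[L, λP + M]`.
-/

open Matrix

/-- The standard identification of `ℝ³` with `su(2)`. -/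
noncomputable def su2 (a : Fin 3 → ℝ) : Matrix (Fin 2) (Fin 2) ℂ :=
  (1 / 2 : ℂ) • !![-Complex.I * a 2, -Complex.I * a 0 - a 1;
                   -Complex.I * a 0 + a 1, Complex.I * a 2]

/-- The Lagrange top Lax matrix `L(λ) = P + M/λ + A/λ²`. -/
noncomputable def lagrangeLax (p m a : Fin 3 → ℝ) (l : ℝ) :
    Matrix (Fin 2) (Fin 2) ℂ :=
  su2 p + ((l : ℂ))⁻¹ • su2 m + (((l : ℂ)) ^ 2)⁻¹ • su2 a

section Algebra

variable {K R : Type*} [Field K] [Ring R] [Algebra K R]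

theorem mul_inv_smul_sub_inv_smul_mul (P M A : R) (c : K) :
    (P + c⁻¹ • M + (c ^ 2)⁻¹ • A) * (c⁻¹ • A) - (c⁻¹ • A) * (P + c⁻¹ • M + (c ^ 2)⁻¹ • A) =
      c⁻¹ • (P * A - A * P) + (c ^ 2)⁻¹ • (M * A - A * M) := by
  simp only [add_mul, mul_add, smul_mul_assoc, mul_smul_comm, smul_smul]
  module

theorem mul_smul_sub_sub_smul_sub_mul (L Y : R) (c : K) :
    L * (c • L - Y) - (c • L - Y) * L = -(L * Y - Y * L) := by
  simp only [mul_sub, sub_mul, mul_smul_comm, smul_mul_assoc]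
  abel

end Algebra

theorem su2_add (x y : Fin 3 → ℝ) : su2 (x + y) = su2 x + su2 y := by
  ext i j
  fin_cases i <;> fin_cases j <;> simp [su2] <;> ring

theorem su2_smul (r : ℝ) (x : Fin 3 → ℝ) : su2 (r • x) = r • su2 x := by
  ext i j
  fin_cases i <;> fin_cases j <;> simp [su2, Complex.real_smul] <;> ring

theorem su2_crossProduct (x y : Fin 3 → ℝ) :
    su2 (x ⨯₃ y) = su2 x * su2 y - su2 y * su2 x := by
  ext i j
  fin_cases i <;> fin_cases j <;>
    simp [su2, crossProduct, Complex.ext_iff] <;> ring_nf <;> simp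

noncomputable def su2LinearMap : (Fin 3 → ℝ) →ₗ[ℝ] Matrix (Fin 2) (Fin 2) ℂ where
  toFun := su2
  map_add' := su2_add
  map_smul' := su2_smul

theorem HasDerivAt.su2_apply {v : ℝ → Fin 3 → ℝ} {v' : Fin 3 → ℝ} {t : ℝ}
    (h : HasDerivAt v v' t) (j k : Fin 2) :
    HasDerivAt (fun s => su2 (v s) j k) (su2 v' j k) t :=
  ((entryLinearMap ℝ ℂ j k ∘ₗ su2LinearMap).toContinuousLinearMap.hasFDerivAt.comp_hasDerivAt
    t h)

theorem HasDerivAt.lagrangeLax_apply (p : Fin 3 → ℝ) {m a : ℝ → Fin 3 → ℝ} {m' a' : Fin 3 → ℝ}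
    {t : ℝ} (hm : HasDerivAt m m' t) (ha : HasDerivAt a a' t) (l : ℝ) (j k : Fin 2) :
    HasDerivAt (fun s => lagrangeLax p (m s) (a s) l j k)
      (((l : ℂ)⁻¹ • su2 m' + ((l : ℂ) ^ 2)⁻¹ • su2 a') j k) t := by
  simp only [lagrangeLax, Matrix.add_apply, Matrix.smul_apply, smul_eq_mul]
  rw [← zero_add ((l : ℂ)⁻¹ * su2 m' j k)]
  exact ((hasDerivAt_const t (su2 p j k)).add ((hm.su2_apply j k).const_mul _)).add
    ((ha.su2_apply j k).const_mul _)

theorem lagrangeLax_smul_sub (p m a : Fin 3 → ℝ) {l : ℝ} (hl : l ≠ 0) :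
    (l : ℂ) • lagrangeLax p m a l - ((l : ℂ) • su2 p + su2 m) = (l : ℂ)⁻¹ • su2 a := by
  have hl' : (l : ℂ) ≠ 0 := Complex.ofReal_ne_zero.mpr hl
  simp only [lagrangeLax, smul_add, smul_smul]
  rw [mul_inv_cancel₀ hl', one_smul, sq, mul_inv, ← mul_assoc, mul_inv_cancel₀ hl', one_mul]
  abel

/-- Solutions of the Lagrange top equations `ṁ = p × a`, `ȧ = m × a` satisfy
the Lax equation `dL(λ)/dt = [L(λ), A/λ] = -[L(λ), λP + M]` (entrywise). -/
theorem lagrange_lax_equation (p : Fin 3 → ℝ) (m a : ℝ → Fin 3 → ℝ)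
    (hm : ∀ t, HasDerivAt m (p ⨯₃ a t) t)
    (ha : ∀ t, HasDerivAt a (m t ⨯₃ a t) t)
    (l : ℝ) (hl : l ≠ 0) (t : ℝ) (j k : Fin 2) :
    HasDerivAt (fun t => lagrangeLax p (m t) (a t) l j k)
      ((lagrangeLax p (m t) (a t) l * (((l : ℂ))⁻¹ • su2 (a t)) -
        (((l : ℂ))⁻¹ • su2 (a t)) * lagrangeLax p (m t) (a t) l) j k) t ∧
    (lagrangeLax p (m t) (a t) l * (((l : ℂ))⁻¹ • su2 (a t)) -
        (((l : ℂ))⁻¹ • su2 (a t)) * lagrangeLax p (m t) (a t) l) =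
      -(lagrangeLax p (m t) (a t) l * ((l : ℂ) • su2 p + su2 (m t)) -
        ((l : ℂ) • su2 p + su2 (m t)) * lagrangeLax p (m t) (a t) l) := by
  constructor
  · rw [lagrangeLax, mul_inv_smul_sub_inv_smul_mul, ← su2_crossProduct, ← su2_crossProduct]
    exact (hm t).lagrangeLax_apply p (ha t) l j k
  · rw [← lagrangeLax_smul_sub p (m t) (a t) hl, mul_smul_sub_sub_smul_sub_mul]
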